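/- arXiv:math/0104040 — 6 statements merged into one kernel-verified Lean document; each statement's English description precedes it below -/
import Mathlib

section
/- If a bounded sequence (u_n) of complex numbers is almost convergent to c (i.e. the Cesàro averages (1/(n+1))∑_{i=k}^{k+n} u_i converge to c uniformly in k), then every Banach limit L (a shift-invariant positive linear functional on ℓ^∞ with L(1)=1=‖L‖) satisfies L(u) = c. -/
noncomputable section

/-- A complex sequence is bounded. -/
def IsBoundedSeq (u : ℕ → ℂ) : Prop := ∃ C : ℝ, ∀ n, ‖u n‖ ≤ C

/-- Almost convergence (Lorentz) of a complex sequence: the Cesàro averages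
`(1/(n+1)) ∑_{i=k}^{k+n} u i` converge to `c` uniformly in `k`. -/
def AlmostConvergentC (u : ℕ → ℂ) (c : ℂ) : Prop :=
  ∀ ε : ℝ, 0 < ε → ∃ N : ℕ, ∀ n ≥ N, ∀ k : ℕ,
    ‖(∑ i ∈ Finset.range (n + 1), u (k + i)) / ((n : ℂ) + 1) - c‖ < ε

/-- Almost convergence (Lorentz) of a real sequence. -/
def AlmostConvergentR (u : ℕ → ℝ) (c : ℝ) : Prop :=
  ∀ ε : ℝ, 0 < ε → ∃ N : ℕ, ∀ n ≥ N, ∀ k : ℕ,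
    |(∑ i ∈ Finset.range (n + 1), u (k + i)) / ((n : ℝ) + 1) - c| < ε

/-- A Banach limit: a shift-invariant positive linear functional on `ℓ^∞(ℕ, ℂ)`
with `L(1) = 1 = ‖L‖`. -/
structure BanachLimit where
  toFun : (ℕ → ℂ) → ℂ
  map_add' : ∀ u v : ℕ → ℂ, IsBoundedSeq u → IsBoundedSeq v →
    toFun (u + v) = toFun u + toFun v
  map_smul' : ∀ (a : ℂ) (u : ℕ → ℂ), IsBoundedSeq u → toFun (a • u) = a * toFun u
  norm_le' : ∀ (u : ℕ → ℂ) (C : ℝ), (∀ n, ‖u n‖ ≤ C) → ‖toFun u‖ ≤ C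
  map_one' : toFun (fun _ => 1) = 1
  shift' : ∀ u : ℕ → ℂ, IsBoundedSeq u → toFun (fun n => u (n + 1)) = toFun u
  pos' : ∀ u : ℕ → ℂ, (∀ n, ∃ r : ℝ, 0 ≤ r ∧ u n = (r : ℂ)) →
    ∃ r : ℝ, 0 ≤ r ∧ toFun u = (r : ℂ)

/-- A gauge with constant `c`: `p : ℕ → (0,∞)` with `p(n+1)/p(n)` strongly almost
convergent to `c > 0`. -/
def IsGauge (p : ℕ → ℝ) (c : ℝ) : Prop :=
  (∀ n, 0 < p n) ∧ 0 < c ∧ AlmostConvergentR (fun n => |p (n + 1) / p n - c|) 0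

lemma bdd_shift (u : ℕ → ℂ) (hu : IsBoundedSeq u) (i : ℕ) :
    IsBoundedSeq (fun k => u (k + i)) := by
  obtain ⟨C, hC⟩ := hu; exact ⟨C, fun n => hC _⟩

lemma bdd_sum (u : ℕ → ℂ) (hu : IsBoundedSeq u) (m : ℕ) :
    IsBoundedSeq (fun k => ∑ i ∈ Finset.range m, u (k + i)) := by
  obtain ⟨C, hC⟩ := hu
  refine ⟨m * C, fun n => ?_⟩
  calc ‖∑ i ∈ Finset.range m, u (n + i)‖
      ≤ ∑ i ∈ Finset.range m, ‖u (n + i)‖ := norm_sum_le _ _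
    _ ≤ ∑ _i ∈ Finset.range m, C := Finset.sum_le_sum (fun i _ => hC _)
    _ = m * C := by simp [mul_comm]

lemma L_shift (L : BanachLimit) (u : ℕ → ℂ) (hu : IsBoundedSeq u) (i : ℕ) :
    L.toFun (fun k => u (k + i)) = L.toFun u := by
  induction i with
  | zero => simp
  | succ i ih =>
    have h1 : (fun k => u (k + (i + 1))) = fun k => (fun k => u (k + i)) (k + 1) := by
      funext k; congr 1; omega
    rw [h1, L.shift' _ (bdd_shift u hu i), ih]

lemma L_sum (L : BanachLimit) (u : ℕ → ℂ) (hu : IsBoundedSeq u) (m : ℕ) :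
    L.toFun (fun k => ∑ i ∈ Finset.range m, u (k + i)) = m * L.toFun u := by
  induction m with
  | zero =>
    have h0 : L.toFun (fun _ => (0 : ℂ)) = 0 :=
      norm_le_zero_iff.mp (L.norm_le' _ 0 (by simp))
    simpa using h0
  | succ m ih =>
    have h1 : (fun k => ∑ i ∈ Finset.range (m + 1), u (k + i))
        = (fun k => ∑ i ∈ Finset.range m, u (k + i)) + (fun k => u (k + m)) := by
      funext k; simp [Finset.sum_range_succ]
    rw [h1, L.map_add' _ _ (bdd_sum u hu m) (bdd_shift u hu m), ih, L_shift L u hu m]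
    push_cast; ring

/-- If a bounded complex sequence is almost convergent to `c`, then every Banach
limit takes the value `c` on it. -/
theorem banachLimit_eq_of_almostConvergent (L : BanachLimit) (u : ℕ → ℂ) (c : ℂ)
    (hu : IsBoundedSeq u) (h : AlmostConvergentC u c) :
    L.toFun u = c := by
  have key : ∀ ε : ℝ, 0 < ε → ‖L.toFun u - c‖ ≤ ε := by
    intro ε hε
    obtain ⟨N, hN⟩ := h ε hε
    set v : ℕ → ℂ := fun k => (∑ i ∈ Finset.range (N + 1), u (k + i)) / ((N : ℂ) + 1)
      with hv
    have hNc : ((N : ℂ) + 1) ≠ 0 := Nat.cast_add_one_ne_zero N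
    have hLv : L.toFun v = L.toFun u := by
      have hveq : v = (((N : ℂ) + 1)⁻¹) •
          (fun k => ∑ i ∈ Finset.range (N + 1), u (k + i)) := by
        funext k; simp [hv, div_eq_inv_mul]
      rw [hveq, L.map_smul' _ _ (bdd_sum u hu (N + 1)), L_sum L u hu (N + 1)]
      push_cast
      field_simp
    have hbv : IsBoundedSeq v := by
      obtain ⟨C, hC⟩ := bdd_sum u hu (N + 1)
      refine ⟨C, fun k => ?_⟩
      have hnorm : ‖((N : ℂ) + 1)‖ = (N : ℝ) + 1 := by
        rw [show ((N : ℂ) + 1) = ((N + 1 : ℕ) : ℂ) by push_cast; ring,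
          Complex.norm_natCast]
        push_cast; ring
      have hCnn : 0 ≤ C := le_trans (norm_nonneg _) (hC 0)
      have h1 : (1 : ℝ) ≤ (N : ℝ) + 1 := by
        have := Nat.cast_nonneg (α := ℝ) N; linarith
      calc ‖v k‖ = ‖∑ i ∈ Finset.range (N + 1), u (k + i)‖ / ((N : ℝ) + 1) := by
            rw [hv]; simp [norm_div, hnorm]
        _ ≤ C / 1 := by
            apply div_le_div₀ (le_trans (norm_nonneg _) (hC 0)) (hC k) one_pos h1
        _ = C := by simp
    have hg : ∀ k, ‖((v + (-c) • (fun _ => (1 : ℂ)) : ℕ → ℂ)) k‖ ≤ ε := by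
      intro k
      have hk := hN N le_rfl k
      simp only [Pi.add_apply, Pi.smul_apply, smul_eq_mul, mul_one]
      have : v k + -c = v k - c := by ring
      rw [this]
      exact le_of_lt hk
    have hLg : L.toFun ((v + (-c) • (fun _ => (1 : ℂ)) : ℕ → ℂ)) = L.toFun u - c := by
      rw [L.map_add' _ _ hbv ⟨‖c‖, fun n => by simp⟩,
        L.map_smul' _ _ ⟨1, fun n => by simp⟩, L.map_one', hLv]
      ring
    have := L.norm_le' _ ε hg
    rwa [hLg] at this
  have hle : ‖L.toFun u - c‖ ≤ 0 :=
    le_of_forall_pos_le_add (fun ε hε => by simpa using key ε hε)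
  exact sub_eq_zero.mp (norm_le_zero_iff.mp hle)
end
end

section
/- Let L be a Banach limit, (u_n) a bounded complex sequence, and (v_n) a bounded real sequence such that |v_n − c| almost converges to 0 for some real c. Then L((u_n v_n)) = c · L((u_n)). -/
/-!
Write `u v = u (v - c) + c u`. The sequence `w = u (v - c)` satisfies `‖w n‖ ≤ C |v n - c|`,
so its window averages tend to `0` uniformly in the starting point: `w` is almost convergent
to `0`. A Banach limit does not change when a sequence is replaced by its averages over windows
of fixed length, so it agrees with the almost-limit wherever one exists; hence `L w = 0`.
-/

noncomputable section

namespace IsBoundedSeq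

variable {u w : ℕ → ℂ}

lemma const (a : ℂ) : IsBoundedSeq (fun _ => a) := ⟨‖a‖, fun _ => le_rfl⟩

lemma sub (hu : IsBoundedSeq u) (hw : IsBoundedSeq w) : IsBoundedSeq (u - w) := by
  obtain ⟨C, hC⟩ := hu
  obtain ⟨D, hD⟩ := hw
  exact ⟨C + D, fun n => (norm_sub_le _ _).trans (add_le_add (hC n) (hD n))⟩

lemma smul (hw : IsBoundedSeq w) (a : ℂ) : IsBoundedSeq (a • w) := by
  obtain ⟨C, hC⟩ := hw
  refine ⟨‖a‖ * C, fun n => ?_⟩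
  rw [Pi.smul_apply, norm_smul]
  exact mul_le_mul_of_nonneg_left (hC n) (norm_nonneg a)

lemma div_const (hw : IsBoundedSeq w) (a : ℂ) : IsBoundedSeq (fun n => w n / a) := by
  simpa only [div_eq_inv_mul, Pi.smul_def, smul_eq_mul] using hw.smul a⁻¹

lemma shift (hw : IsBoundedSeq w) (j : ℕ) : IsBoundedSeq (fun n => w (n + j)) := by
  obtain ⟨C, hC⟩ := hw
  exact ⟨C, fun n => hC _⟩

lemma sum_shifts (hw : IsBoundedSeq w) (m : ℕ) :
    IsBoundedSeq (fun k => ∑ i ∈ Finset.range m, w (k + i)) := by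
  obtain ⟨C, hC⟩ := hw
  refine ⟨m * C, fun k => ?_⟩
  calc ‖∑ i ∈ Finset.range m, w (k + i)‖
      ≤ ∑ i ∈ Finset.range m, ‖w (k + i)‖ := norm_sum_le _ _
    _ ≤ ∑ _i ∈ Finset.range m, C := Finset.sum_le_sum fun i _ => hC _
    _ = m * C := by simp

end IsBoundedSeq

lemma AlmostConvergentR.exists_le_of_nonneg {d : ℕ → ℝ} {c : ℝ} (hd₀ : ∀ n, 0 ≤ d n)
    (hd : AlmostConvergentR d c) : ∃ C, ∀ n, d n ≤ C := by
  obtain ⟨N, hN⟩ := hd 1 one_pos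
  refine ⟨(N + 1) * (c + 1), fun n => ?_⟩
  have hN₁ : (0 : ℝ) < N + 1 := by positivity
  have hsum := (abs_lt.mp (hN N le_rfl n)).2
  rw [sub_lt_iff_lt_add', div_lt_iff₀ hN₁] at hsum
  calc d n = d (n + 0) := rfl
    _ ≤ ∑ i ∈ Finset.range (N + 1), d (n + i) :=
        Finset.single_le_sum (fun i _ => hd₀ (n + i)) (Finset.mem_range.mpr N.succ_pos)
    _ ≤ (N + 1) * (c + 1) := by linarith

lemma AlmostConvergentC.zero_of_norm_le_mul {w : ℕ → ℂ} {d : ℕ → ℝ} {M : ℝ}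
    (hw : ∀ n, ‖w n‖ ≤ M * d n) (hd : AlmostConvergentR d 0) : AlmostConvergentC w 0 := by
  intro ε hε
  obtain ⟨N, hN⟩ := hd (ε / (|M| + 1)) (by positivity)
  refine ⟨N, fun n hn k => ?_⟩
  have havg := hN n hn k
  rw [sub_zero] at havg ⊢
  have hnorm_n : ‖(n : ℂ) + 1‖ = n + 1 := by exact_mod_cast Complex.norm_natCast (n + 1)
  rw [norm_div, hnorm_n]
  calc ‖∑ i ∈ Finset.range (n + 1), w (k + i)‖ / (n + 1)
      ≤ (∑ i ∈ Finset.range (n + 1), ‖w (k + i)‖) / (n + 1) := by gcongr; exact norm_sum_le _ _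
    _ ≤ (∑ i ∈ Finset.range (n + 1), M * d (k + i)) / (n + 1) := by gcongr with i; exact hw _
    _ = M * ((∑ i ∈ Finset.range (n + 1), d (k + i)) / (n + 1)) := by rw [← Finset.mul_sum]; ring
    _ ≤ |M| * |(∑ i ∈ Finset.range (n + 1), d (k + i)) / (n + 1)| := by
        rw [← abs_mul]; exact le_abs_self _
    _ ≤ |M| * (ε / (|M| + 1)) := by gcongr
    _ < ε := by
        rw [mul_div_assoc', div_lt_iff₀ (by positivity)]
        nlinarith

namespace BanachLimit

variable (L : BanachLimit) {u w : ℕ → ℂ}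

lemma map_const (a : ℂ) : L.toFun (fun _ => a) = a := by
  have h := L.map_smul' a (fun _ => 1) (IsBoundedSeq.const 1)
  rw [L.map_one', mul_one] at h
  simpa [Pi.smul_def] using h

lemma map_sub (hu : IsBoundedSeq u) (hw : IsBoundedSeq w) :
    L.toFun (u - w) = L.toFun u - L.toFun w := by
  rw [eq_sub_iff_add_eq, ← L.map_add' _ _ (hu.sub hw) hw, sub_add_cancel]

lemma map_shift (hw : IsBoundedSeq w) (j : ℕ) : L.toFun (fun n => w (n + j)) = L.toFun w := by
  induction j with
  | zero => rfl
  | succ j ih =>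
    rw [← ih, ← L.shift' _ (hw.shift j)]
    simp only [add_right_comm _ 1 j, add_assoc]

lemma map_sum_shifts (hw : IsBoundedSeq w) (m : ℕ) :
    L.toFun (fun k => ∑ i ∈ Finset.range m, w (k + i)) = m * L.toFun w := by
  induction m with
  | zero => simpa using L.map_const 0
  | succ m ih =>
    have hsplit : (fun k => ∑ i ∈ Finset.range (m + 1), w (k + i)) =
        (fun k => ∑ i ∈ Finset.range m, w (k + i)) + (fun k => w (k + m)) := by
      funext k
      simp [Finset.sum_range_succ]
    rw [hsplit, L.map_add' _ _ (hw.sum_shifts m) (hw.shift m), ih, L.map_shift hw]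
    push_cast
    ring

lemma map_average_shifts (hw : IsBoundedSeq w) (n : ℕ) :
    L.toFun (fun k => (∑ i ∈ Finset.range (n + 1), w (k + i)) / ((n : ℂ) + 1)) = L.toFun w := by
  have hscale : (fun k => (∑ i ∈ Finset.range (n + 1), w (k + i)) / ((n : ℂ) + 1)) =
      ((n : ℂ) + 1)⁻¹ • fun k => ∑ i ∈ Finset.range (n + 1), w (k + i) := by
    funext k
    simp [div_eq_inv_mul]
  rw [hscale, L.map_smul' _ _ (hw.sum_shifts _), L.map_sum_shifts hw]
  push_cast
  exact inv_mul_cancel_left₀ (Nat.cast_add_one_ne_zero n) _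

lemma map_eq_of_almostConvergentC {a : ℂ} (hw : IsBoundedSeq w) (ha : AlmostConvergentC w a) :
    L.toFun w = a := by
  refine eq_of_forall_dist_le fun ε hε => ?_
  obtain ⟨N, hN⟩ := ha ε hε
  have haverage : L.toFun w - a = L.toFun
      ((fun k => (∑ i ∈ Finset.range (N + 1), w (k + i)) / ((N : ℂ) + 1)) - fun _ => a) := by
    rw [L.map_sub ((hw.sum_shifts _).div_const _) (IsBoundedSeq.const a),
      L.map_average_shifts hw, L.map_const]
  rw [dist_eq_norm, haverage]
  exact L.norm_le' _ ε fun k => (hN N le_rfl k).le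

end BanachLimit

theorem banachLimit_mul_stronglyAlmostConvergent_general (L : BanachLimit)
    (u : ℕ → ℂ) (v : ℕ → ℝ) (c : ℝ)
    (hu : IsBoundedSeq u)
    (h : AlmostConvergentR (fun n => |v n - c|) 0) :
    L.toFun (fun n => u n * (v n : ℂ)) = (c : ℂ) * L.toFun u := by
  have ⟨C, hC⟩ := hu
  obtain ⟨D, hD⟩ := h.exists_le_of_nonneg fun n => abs_nonneg _
  have hnorm : ∀ n, ‖u n * ((v n : ℂ) - c)‖ ≤ C * |v n - c| := fun n => by
    rw [norm_mul, ← Complex.ofReal_sub, Complex.norm_real, Real.norm_eq_abs]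
    exact mul_le_mul_of_nonneg_right (hC n) (abs_nonneg _)
  have hbdd : IsBoundedSeq fun n => u n * ((v n : ℂ) - c) :=
    ⟨C * D, fun n => (hnorm n).trans
      (mul_le_mul_of_nonneg_left (hD n) ((norm_nonneg _).trans (hC 0)))⟩
  have hzero : L.toFun (fun n => u n * ((v n : ℂ) - c)) = 0 :=
    L.map_eq_of_almostConvergentC hbdd (.zero_of_norm_le_mul hnorm h)
  have hsplit : (fun n => u n * (v n : ℂ)) = (fun n => u n * ((v n : ℂ) - c)) + (c : ℂ) • u := by
    funext n
    simp only [Pi.add_apply, Pi.smul_apply, smul_eq_mul]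
    ring
  rw [hsplit, L.map_add' _ _ hbdd (hu.smul _), hzero, L.map_smul' _ _ hu, zero_add]

/-- If `(v n)` is a bounded real sequence with `|v n - c|` almost convergent to `0`,
then `L((u n * v n)) = c * L((u n))` for every Banach limit `L` and every bounded
complex sequence `(u n)`. -/
theorem banachLimit_mul_stronglyAlmostConvergent (L : BanachLimit)
    (u : ℕ → ℂ) (v : ℕ → ℝ) (c : ℝ)
    (hu : IsBoundedSeq u) (hv : ∃ C : ℝ, ∀ n, |v n| ≤ C)
    (h : AlmostConvergentR (fun n => |v n - c|) 0) :
    L.toFun (fun n => u n * (v n : ℂ)) = (c : ℂ) * L.toFun u :=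
  banachLimit_mul_stronglyAlmostConvergent_general L u v c hu h
end
end

section
/- If p : ℕ → (0,∞) is a gauge with constant c_p (so p(n+1)/p(n) strongly almost converges to c_p), then the sequence p(m+n)/p(m) strongly almost converges to c_p^n as m → ∞, for every fixed n ∈ ℕ. -/
/-!
Write `q m = p (m + 1) / p m` and `r n m = p (m + n) / p m`.
Since `r (n + 1) m = q (m + n) * r n m`,
`|r (n + 1) m - c ^ (n + 1)| ≤ |q (m + n)| * |r n m - c ^ n| + c ^ n * |q (m + n) - c|`,
so by induction on `n` the error at `n + 1` is dominated by a combination, with bounded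
coefficients, of the error at `n` and a shift of `|q - c|`. The coefficient `q` is bounded because
the nonnegative almost convergent sequence `|q - c|` is, and almost convergence to `0` passes
down to smaller nonnegative sequences.
-/

noncomputable section

def windowAvg (u : ℕ → ℝ) (k n : ℕ) : ℝ :=
  (∑ i ∈ Finset.range (n + 1), u (k + i)) / ((n : ℝ) + 1)

theorem almostConvergentR_iff_windowAvg {u : ℕ → ℝ} {a : ℝ} :
    AlmostConvergentR u a ↔
      ∀ ε > 0, ∃ N : ℕ, ∀ n ≥ N, ∀ k, |windowAvg u k n - a| < ε :=
  Iff.rfl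

theorem windowAvg_add (u v : ℕ → ℝ) (k n : ℕ) :
    windowAvg (fun m => u m + v m) k n = windowAvg u k n + windowAvg v k n := by
  simp only [windowAvg, Finset.sum_add_distrib, add_div]

theorem windowAvg_const_mul (A : ℝ) (u : ℕ → ℝ) (k n : ℕ) :
    windowAvg (fun m => A * u m) k n = A * windowAvg u k n := by
  simp only [windowAvg, ← Finset.mul_sum, mul_div_assoc]

theorem windowAvg_shift (u : ℕ → ℝ) (d k n : ℕ) :
    windowAvg (fun m => u (m + d)) k n = windowAvg u (k + d) n := by
  simp only [windowAvg, add_right_comm k]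

theorem windowAvg_const (a : ℝ) (k n : ℕ) : windowAvg (fun _ => a) k n = a := by
  simp only [windowAvg, Finset.sum_const, Finset.card_range, nsmul_eq_mul]
  field_simp
  push_cast
  ring

theorem windowAvg_nonneg {u : ℕ → ℝ} (hu : ∀ m, 0 ≤ u m) (k n : ℕ) :
    0 ≤ windowAvg u k n :=
  div_nonneg (Finset.sum_nonneg fun i _ => hu _) (by positivity)

theorem windowAvg_mono {u v : ℕ → ℝ} (huv : ∀ m, u m ≤ v m) (k n : ℕ) :
    windowAvg u k n ≤ windowAvg v k n := by
  unfold windowAvg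
  gcongr with i
  exact huv _

namespace AlmostConvergentR

variable {u v : ℕ → ℝ} {a b : ℝ}

theorem const (a : ℝ) : AlmostConvergentR (fun _ => a) a :=
  almostConvergentR_iff_windowAvg.2 fun ε hε =>
    ⟨0, fun n _ k => by rwa [windowAvg_const, sub_self, abs_zero]⟩

theorem shift (h : AlmostConvergentR u a) (d : ℕ) : AlmostConvergentR (fun m => u (m + d)) a := by
  rw [almostConvergentR_iff_windowAvg] at *
  intro ε hε
  obtain ⟨N, hN⟩ := h ε hε
  refine ⟨N, fun n hn k => ?_⟩
  simpa only [windowAvg_shift] using hN n hn (k + d)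

theorem const_mul (h : AlmostConvergentR u a) (A : ℝ) :
    AlmostConvergentR (fun m => A * u m) (A * a) := by
  rw [almostConvergentR_iff_windowAvg] at *
  intro ε hε
  obtain ⟨N, hN⟩ := h (ε / (|A| + 1)) (by positivity)
  refine ⟨N, fun n hn k => ?_⟩
  rw [windowAvg_const_mul, ← mul_sub, abs_mul]
  calc |A| * |windowAvg u k n - a| ≤ (|A| + 1) * |windowAvg u k n - a| := by
        gcongr; linarith
    _ < (|A| + 1) * (ε / (|A| + 1)) := by gcongr; exact hN n hn k
    _ = ε := by field_simp

theorem add (hu : AlmostConvergentR u a) (hv : AlmostConvergentR v b) :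
    AlmostConvergentR (fun m => u m + v m) (a + b) := by
  rw [almostConvergentR_iff_windowAvg] at *
  intro ε hε
  obtain ⟨N₁, h₁⟩ := hu (ε / 2) (by positivity)
  obtain ⟨N₂, h₂⟩ := hv (ε / 2) (by positivity)
  refine ⟨max N₁ N₂, fun n hn k => ?_⟩
  have e₁ := h₁ n (le_of_max_le_left hn) k
  have e₂ := h₂ n (le_of_max_le_right hn) k
  rw [windowAvg_add, add_sub_add_comm]
  calc _ ≤ |windowAvg u k n - a| + |windowAvg v k n - b| := abs_add_le _ _
    _ < ε / 2 + ε / 2 := add_lt_add e₁ e₂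
    _ = ε := add_halves ε

theorem of_nonneg_of_le (hu : ∀ m, 0 ≤ u m) (huv : ∀ m, u m ≤ v m)
    (hv : AlmostConvergentR v 0) : AlmostConvergentR u 0 := by
  rw [almostConvergentR_iff_windowAvg] at *
  intro ε hε
  obtain ⟨N, hN⟩ := hv ε hε
  refine ⟨N, fun n hn k => ?_⟩
  rw [sub_zero, abs_of_nonneg (windowAvg_nonneg hu k n)]
  exact (windowAvg_mono huv k n).trans_lt ((le_abs_self _).trans_lt (by simpa using hN n hn k))

/-- For nonnegative `u`, `u m` is at most the sum over any window starting at `m`, and a window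
of fixed length `N + 1` has sum below `(N + 1) * (a + 1)` once `N` is large. -/
theorem bddAbove_range_of_nonneg (h : AlmostConvergentR u a) (hu : ∀ m, 0 ≤ u m) :
    BddAbove (Set.range u) := by
  rw [almostConvergentR_iff_windowAvg] at h
  obtain ⟨N, hN⟩ := h 1 one_pos
  refine ⟨((N : ℝ) + 1) * (a + 1), ?_⟩
  rintro _ ⟨m, rfl⟩
  have havg : windowAvg u m N < a + 1 := by
    linarith [le_abs_self (windowAvg u m N - a), hN N le_rfl m]
  have hmem : u (m + 0) ≤ ∑ i ∈ Finset.range (N + 1), u (m + i) :=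
    Finset.single_le_sum (f := fun i => u (m + i)) (fun i _ => hu _) (by simp)
  unfold windowAvg at havg
  rw [div_lt_iff₀ (by positivity)] at havg
  simp only [add_zero] at hmem
  linarith

end AlmostConvergentR

theorem abs_mul_sub_mul_le (q r c d : ℝ) :
    |q * r - c * d| ≤ |q| * |r - d| + |d| * |q - c| := by
  calc |q * r - c * d| = |q * (r - d) + d * (q - c)| := by ring_nf
    _ ≤ |q * (r - d)| + |d * (q - c)| := abs_add_le _ _
    _ = |q| * |r - d| + |d| * |q - c| := by rw [abs_mul, abs_mul]

theorem IsGauge.bddAbove_abs_ratio {p : ℕ → ℝ} {c : ℝ} (hp : IsGauge p c) :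
    ∃ B, ∀ m, |p (m + 1) / p m| ≤ B := by
  obtain ⟨C, hC⟩ := hp.2.2.bddAbove_range_of_nonneg fun m => abs_nonneg _
  refine ⟨C + |c|, fun m => ?_⟩
  calc |p (m + 1) / p m| = |(p (m + 1) / p m - c) + c| := by rw [sub_add_cancel]
    _ ≤ |p (m + 1) / p m - c| + |c| := abs_add_le _ _
    _ ≤ C + |c| := by gcongr; exact hC ⟨m, rfl⟩

/-- For a gauge `p` with constant `c`, the sequence `m ↦ p(m+n)/p(m)` strongly
almost converges to `c ^ n`, for every fixed `n`. -/
theorem gauge_ratio_pow (p : ℕ → ℝ) (c : ℝ) (hp : IsGauge p c) (n : ℕ) :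
    AlmostConvergentR (fun m => |p (m + n) / p m - c ^ n|) 0 := by
  obtain ⟨B, hB⟩ := hp.bddAbove_abs_ratio
  induction n with
  | zero =>
    simpa [div_self (hp.1 _).ne'] using AlmostConvergentR.const 0
  | succ n ih =>
    have hstep : ∀ m, p (m + (n + 1)) / p m = p (m + n + 1) / p (m + n) * (p (m + n) / p m) :=
      fun m => (div_mul_div_cancel₀ (hp.1 _).ne').symm
    have hdom := (ih.const_mul B).add ((hp.2.2.shift n).const_mul |c ^ n|)
    simp only [mul_zero, add_zero] at hdom
    refine .of_nonneg_of_le (fun m => abs_nonneg _) (fun m => ?_) hdom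
    rw [hstep, pow_succ']
    refine (abs_mul_sub_mul_le _ _ _ _).trans ?_
    exact add_le_add (mul_le_mul_of_nonneg_right (hB _) (abs_nonneg _)) le_rfl
end
end

section
/- Let M be a von Neumann algebra, T ∈ M dominated by a gauge p with constant c_p, and L a Banach limit. Then E_{L,T}(T* X T) = c_p^2 · E_{L,T}(X) for all X ∈ M, where E_{L,T}(X) is defined by ⟨E_{L,T}(X)x, y⟩ = L({⟨X T^n x, T^n y⟩/p(n)^2}_n). -/
noncomputable section

variable {H : Type*} [NormedAddCommGroup H] [InnerProductSpace ℂ H] [CompleteSpace H]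

/-- Positivity of a matrix of operators `[A i j]` acting on `H ⊕ ⋯ ⊕ H`. -/
def MatrixIsPos {k : ℕ} (A : Matrix (Fin k) (Fin k) (H →L[ℂ] H)) : Prop :=
  ∀ x : Fin k → H, ∃ r : ℝ, 0 ≤ r ∧
    (∑ i, ∑ j, (inner ℂ (x i) (A i j (x j)) : ℂ)) = (r : ℂ)

/-- Ultraweak (σ-weak) continuity of a functional on `B(H)`:
`l(A) = ∑ ⟨A xᵢ, yᵢ⟩` with `∑ ‖xᵢ‖² < ∞`, `∑ ‖yᵢ‖² < ∞`. -/
def UWContinuousFunctional (l : (H →L[ℂ] H) → ℂ) : Prop :=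
  ∃ x y : ℕ → H, Summable (fun i => ‖x i‖ ^ 2) ∧ Summable (fun i => ‖y i‖ ^ 2) ∧
    ∀ A : H →L[ℂ] H, HasSum (fun i => (inner ℂ (y i) (A (x i)) : ℂ)) (l A)

/-- `τ` is a faithful normal trace on the von Neumann algebra `M`. -/
def IsFiniteTrace (M : VonNeumannAlgebra H) (τ : (H →L[ℂ] H) →ₗ[ℂ] ℂ) : Prop :=
  (∀ A ∈ M, ∀ B ∈ M, τ (A * B) = τ (B * A)) ∧
  (∀ A ∈ M, A.IsPositive → ∃ r : ℝ, 0 ≤ r ∧ τ A = (r : ℂ)) ∧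
  (∀ A ∈ M, A.IsPositive → τ A = 0 → A = 0) ∧
  UWContinuousFunctional (fun A => τ A)

/-! Write `a n = ⟪T^n y, X T^n x⟫`. Then `E (T* X T)` is the Banach limit of `a (n+1) / p(n)²`,
and by shift invariance `E X` is that of `v n = a (n+1) / p(n+1)²`. The difference of the first
sequence and `c² v` is `v n · ((p(n+1)/p(n))² - c²)`, which is dominated by a multiple of
`|p(n+1)/p(n) - c|`. A Banach limit vanishes on every sequence dominated by one almost convergent
to `0`: it is unchanged by averaging over shifts, and those averages are uniformly small. -/

namespace IsBoundedSeq

variable {u v : ℕ → ℂ}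

lemma add (hu : IsBoundedSeq u) (hv : IsBoundedSeq v) : IsBoundedSeq (u + v) := by
  obtain ⟨C, hC⟩ := hu
  obtain ⟨D, hD⟩ := hv
  exact ⟨C + D, fun n => (norm_add_le _ _).trans (add_le_add (hC n) (hD n))⟩

lemma const_smul (hu : IsBoundedSeq u) (a : ℂ) : IsBoundedSeq (a • u) := by
  obtain ⟨C, hC⟩ := hu
  refine ⟨‖a‖ * C, fun n => ?_⟩
  rw [Pi.smul_apply, norm_smul]
  exact mul_le_mul_of_nonneg_left (hC n) (norm_nonneg a)

lemma comp_add (hu : IsBoundedSeq u) (i : ℕ) : IsBoundedSeq fun n => u (n + i) := by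
  obtain ⟨C, hC⟩ := hu
  exact ⟨C, fun n => hC _⟩

lemma of_succ (hu : IsBoundedSeq fun n => u (n + 1)) : IsBoundedSeq u := by
  obtain ⟨C, hC⟩ := hu
  refine ⟨max ‖u 0‖ C, fun n => ?_⟩
  cases n with
  | zero => exact le_max_left _ _
  | succ n => exact (hC n).trans (le_max_right _ _)

lemma finset_sum {ι : Type*} (s : Finset ι) {f : ι → ℕ → ℂ} (hf : ∀ i, IsBoundedSeq (f i)) :
    IsBoundedSeq fun n => ∑ i ∈ s, f i n := by
  classical
  induction s using Finset.induction_on with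
  | empty => exact ⟨0, by simp⟩
  | insert i s hi ih =>
    simp only [Finset.sum_insert hi]
    exact (hf i).add ih

end IsBoundedSeq

namespace AlmostConvergentR

variable {d : ℕ → ℝ} {c : ℝ}

lemma exists_sum_lt (h : AlmostConvergentR d c) {ε : ℝ} (hε : 0 < ε) :
    ∃ N : ℕ, ∀ k, ∑ i ∈ Finset.range (N + 1), d (k + i) < (c + ε) * (N + 1) := by
  obtain ⟨N, hN⟩ := h ε hε
  refine ⟨N, fun k => ?_⟩
  have h := (abs_lt.mp (hN N le_rfl k)).2
  rwa [sub_lt_iff_lt_add', div_lt_iff₀ (by positivity)] at h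

lemma exists_forall_le (hd : ∀ n, 0 ≤ d n) (h : AlmostConvergentR d c) :
    ∃ K, ∀ n, d n ≤ K := by
  obtain ⟨N, hN⟩ := h.exists_sum_lt one_pos
  refine ⟨(c + 1) * (N + 1), fun k => ?_⟩
  have hk := Finset.single_le_sum (f := fun i => d (k + i)) (fun i _ => hd _)
    (Finset.mem_range.mpr N.succ_pos)
  simp only [add_zero] at hk
  linarith [hN k]

lemma const_mul_s5 (h : AlmostConvergentR d c) (B : ℝ) :
    AlmostConvergentR (fun n => B * d n) (B * c) := by
  intro ε hε
  obtain ⟨N, hN⟩ := h (ε / (|B| + 1)) (by positivity)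
  refine ⟨N, fun n hn k => ?_⟩
  rw [← Finset.mul_sum, mul_div_assoc, ← mul_sub, abs_mul]
  calc |B| * |(∑ i ∈ Finset.range (n + 1), d (k + i)) / ((n : ℝ) + 1) - c|
      ≤ |B| * (ε / (|B| + 1)) := mul_le_mul_of_nonneg_left (hN n hn k).le (abs_nonneg B)
    _ < ε := by
      rw [mul_div_assoc', div_lt_iff₀ (by positivity)]
      nlinarith

end AlmostConvergentR

lemma IsGauge.exists_abs_sq_sub_le {p : ℕ → ℝ} {c : ℝ} (hp : IsGauge p c) :
    ∃ B, ∀ n, |(p (n + 1) / p n) ^ 2 - c ^ 2| ≤ B * |p (n + 1) / p n - c| := by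
  obtain ⟨-, hc, hq⟩ := hp
  obtain ⟨K, hK⟩ := hq.exists_forall_le fun n => abs_nonneg _
  refine ⟨K + 2 * c, fun n => ?_⟩
  set q := p (n + 1) / p n
  have hqc : |q + c| ≤ K + 2 * c :=
    calc |q + c| = |(q - c) + 2 * c| := by ring_nf
      _ ≤ |q - c| + |2 * c| := abs_add_le _ _
      _ ≤ K + 2 * c := by rw [abs_of_pos (by linarith : (0 : ℝ) < 2 * c)]; linarith [hK n]
  rw [sq_sub_sq, abs_mul]
  exact mul_le_mul_of_nonneg_right hqc (abs_nonneg _)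

namespace BanachLimit

variable (L : BanachLimit) {u v w : ℕ → ℂ}

lemma map_zero : L.toFun 0 = 0 := by
  simpa using L.map_smul' 0 (fun _ => 1) ⟨1, fun n => by simp⟩

lemma map_comp_add (hw : IsBoundedSeq w) (i : ℕ) :
    L.toFun (fun n => w (n + i)) = L.toFun w := by
  induction i with
  | zero => rfl
  | succ i ih =>
    rw [← ih, ← L.shift' _ (hw.comp_add i)]
    simp only [add_right_comm, add_assoc]

lemma map_finset_sum {ι : Type*} (s : Finset ι) {f : ι → ℕ → ℂ}
    (hf : ∀ i, IsBoundedSeq (f i)) :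
    L.toFun (fun n => ∑ i ∈ s, f i n) = ∑ i ∈ s, L.toFun (f i) := by
  classical
  induction s using Finset.induction_on with
  | empty => exact L.map_zero
  | insert i s hi ih =>
    rw [Finset.sum_insert hi, ← ih]
    simp only [Finset.sum_insert hi]
    exact L.map_add' _ _ (hf i) (IsBoundedSeq.finset_sum s hf)

lemma map_eq_zero_of_norm_le {d : ℕ → ℝ} (hw : ∀ n, ‖w n‖ ≤ d n)
    (hd : AlmostConvergentR d 0) : L.toFun w = 0 := by
  obtain ⟨K, hK⟩ := hd.exists_forall_le fun n => (norm_nonneg _).trans (hw n)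
  have hwb : IsBoundedSeq w := ⟨K, fun n => (hw n).trans (hK n)⟩
  refine norm_le_zero_iff.mp (le_of_forall_pos_le_add fun ε hε => ?_)
  obtain ⟨N, hN⟩ := hd.exists_sum_lt hε
  have hsum : L.toFun (fun n => ∑ i ∈ Finset.range (N + 1), w (n + i)) =
      (N + 1) * L.toFun w := by
    rw [L.map_finset_sum _ (hwb.comp_add ·)]
    simp [L.map_comp_add hwb]
  have hle := L.norm_le' (fun n => ∑ i ∈ Finset.range (N + 1), w (n + i)) (ε * (N + 1))
    fun n => ((norm_sum_le _ _).trans (Finset.sum_le_sum fun i _ => hw _)).trans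
      (by simpa using (hN n).le)
  rw [hsum, norm_mul, mul_comm ε] at hle
  norm_cast at hle
  rw [zero_add]
  exact le_of_mul_le_mul_left hle (by positivity)

lemma map_eq_of_norm_sub_le {d : ℕ → ℝ} (hv : IsBoundedSeq v) (h : ∀ n, ‖u n - v n‖ ≤ d n)
    (hd : AlmostConvergentR d 0) : L.toFun u = L.toFun v := by
  obtain ⟨K, hK⟩ := hd.exists_forall_le fun n => (norm_nonneg _).trans (h n)
  have hsub : IsBoundedSeq (u - v) := ⟨K, fun n => (h n).trans (hK n)⟩
  calc L.toFun u = L.toFun ((u - v) + v) := by rw [sub_add_cancel]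
    _ = L.toFun v := by
      rw [L.map_add' _ _ hsub hv, L.map_eq_zero_of_norm_le (w := u - v) h hd, zero_add]

lemma map_succ_div_sq_eq {p : ℕ → ℝ} {c : ℝ} (hp : IsGauge p c) {a : ℕ → ℂ}
    (ha : IsBoundedSeq fun n => a (n + 1) / (p (n + 1) : ℂ) ^ 2) :
    L.toFun (fun n => a (n + 1) / (p n : ℂ) ^ 2) =
      (c : ℂ) ^ 2 * L.toFun (fun n => a n / (p n : ℂ) ^ 2) := by
  obtain ⟨B, hB⟩ := hp.exists_abs_sq_sub_le
  obtain ⟨C, hC⟩ := id ha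
  have hp0 : ∀ n, (p n : ℂ) ≠ 0 := fun n => Complex.ofReal_ne_zero.mpr (hp.1 n).ne'
  have hsub : ∀ n, ‖a (n + 1) / (p n : ℂ) ^ 2 - (c : ℂ) ^ 2 * (a (n + 1) / (p (n + 1) : ℂ) ^ 2)‖
      ≤ C * B * |p (n + 1) / p n - c| := by
    intro n
    have hfactor : a (n + 1) / (p n : ℂ) ^ 2 - (c : ℂ) ^ 2 * (a (n + 1) / (p (n + 1) : ℂ) ^ 2) =
        a (n + 1) / (p (n + 1) : ℂ) ^ 2 * (((p (n + 1) / p n) ^ 2 - c ^ 2 : ℝ) : ℂ) := by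
      have := hp0 n
      have := hp0 (n + 1)
      push_cast
      field_simp
    rw [hfactor, norm_mul, Complex.norm_real, Real.norm_eq_abs, mul_assoc]
    exact mul_le_mul (hC n) (hB n) (abs_nonneg _) ((norm_nonneg _).trans (hC 0))
  calc _ = L.toFun ((c : ℂ) ^ 2 • fun n => a (n + 1) / (p (n + 1) : ℂ) ^ 2) :=
        L.map_eq_of_norm_sub_le (ha.const_smul _) hsub (by simpa using hp.2.2.const_mul_s5 (C * B))
    _ = _ := by
      rw [L.map_smul' _ _ ha]
      congr 1
      exact L.shift' _ (IsBoundedSeq.of_succ (u := fun n => a n / (p n : ℂ) ^ 2) ha)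

end BanachLimit

lemma norm_inner_apply_apply_le {𝕜 E : Type*} [RCLike 𝕜] [NormedAddCommGroup E]
    [InnerProductSpace 𝕜 E] (S X : E →L[𝕜] E) (x y : E) :
    ‖inner 𝕜 (S y) (X (S x))‖ ≤ ‖S‖ ^ 2 * (‖X‖ * ‖x‖ * ‖y‖) :=
  calc _ ≤ ‖S y‖ * (‖X‖ * ‖S x‖) :=
        (norm_inner_le_norm _ _).trans (mul_le_mul_of_nonneg_left (X.le_opNorm _) (norm_nonneg _))
    _ ≤ (‖S‖ * ‖y‖) * (‖X‖ * (‖S‖ * ‖x‖)) := by gcongr <;> exact S.le_opNorm _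
    _ = _ := by ring

lemma isBoundedSeq_inner_pow_succ_div_sq {E : Type*} [NormedAddCommGroup E]
    [InnerProductSpace ℂ E] {T : E →L[ℂ] E} {p : ℕ → ℝ} (hp : ∀ n, 0 < p n)
    (hdom : ∀ n : ℕ, 1 ≤ n → ‖T ^ n‖ ≤ p n) (X : E →L[ℂ] E) (x y : E) :
    IsBoundedSeq fun n =>
      inner ℂ ((T ^ (n + 1)) y) (X ((T ^ (n + 1)) x)) / (p (n + 1) : ℂ) ^ 2 := by
  refine ⟨‖X‖ * ‖x‖ * ‖y‖, fun n => ?_⟩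
  have hpn := hp (n + 1)
  rw [norm_div, norm_pow, Complex.norm_real, Real.norm_eq_abs, abs_of_pos hpn,
    div_le_iff₀ (by positivity), mul_comm]
  refine (norm_inner_apply_apply_le _ _ _ _).trans ?_
  gcongr
  exact hdom _ n.succ_pos

theorem E_LT_star_mul_general
    {H : Type*} [NormedAddCommGroup H] [InnerProductSpace ℂ H] [CompleteSpace H]
    (M : VonNeumannAlgebra H) (T : H →L[ℂ] H)
    (p : ℕ → ℝ) (c : ℝ) (hp : IsGauge p c)
    (hdom : ∀ n : ℕ, 1 ≤ n → ‖T ^ n‖ ≤ p n)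
    (L : BanachLimit)
    (E : (H →L[ℂ] H) → (H →L[ℂ] H))
    (hE : ∀ (X : H →L[ℂ] H) (x y : H),
      (inner ℂ y (E X x) : ℂ) =
        L.toFun (fun n => (inner ℂ ((T ^ n) y) (X ((T ^ n) x)) : ℂ) / ((p n : ℂ) ^ 2))) :
    ∀ X ∈ M, E (star T * X * T) = ((c : ℂ) ^ 2) • E X := by
  intro X _
  ext x
  refine ext_inner_left ℂ fun y => ?_
  have hstar : ∀ n, inner ℂ ((T ^ n) y) ((star T * X * T) ((T ^ n) x)) =
      inner ℂ ((T ^ (n + 1)) y) (X ((T ^ (n + 1)) x)) := fun n => by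
    simp only [ContinuousLinearMap.star_eq_adjoint, pow_succ', mul_apply_eq_comp,
      ContinuousLinearMap.adjoint_inner_right]
  rw [hE, smul_apply, inner_smul_right, hE]
  simp_rw [hstar]
  exact L.map_succ_div_sq_eq (a := fun n => inner ℂ ((T ^ n) y) (X ((T ^ n) x))) hp
    (isBoundedSeq_inner_pow_succ_div_sq hp.1 hdom X x y)

/-- `E_{L,T}(T* X T) = c_p² E_{L,T}(X)` for all `X ∈ M`. -/
theorem E_LT_star_mul
    {H : Type*} [NormedAddCommGroup H] [InnerProductSpace ℂ H] [CompleteSpace H]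
    (M : VonNeumannAlgebra H) (T : H →L[ℂ] H) (hT : T ∈ M)
    (p : ℕ → ℝ) (c : ℝ) (hp : IsGauge p c)
    (hdom : ∀ n : ℕ, 1 ≤ n → ‖T ^ n‖ ≤ p n)
    (L : BanachLimit)
    (E : (H →L[ℂ] H) → (H →L[ℂ] H))
    (hE : ∀ (X : H →L[ℂ] H) (x y : H),
      (inner ℂ y (E X x) : ℂ) =
        L.toFun (fun n => (inner ℂ ((T ^ n) y) (X ((T ^ n) x)) : ℂ) / ((p n : ℂ) ^ 2))) :
    ∀ X ∈ M, E (star T * X * T) = ((c : ℂ) ^ 2) • E X :=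
  E_LT_star_mul_general M T p c hp hdom L E hE
end
end

section
/- Let M be a von Neumann algebra, T ∈ M dominated by a gauge p, and L a Banach limit. If A, B ∈ M commute with T, then E_{L,T}(A* X B) = A* E_{L,T}(X) B for all X ∈ M. -/
noncomputable section

variable {H : Type*} [NormedAddCommGroup H] [InnerProductSpace ℂ H] [CompleteSpace H]

namespace ContinuousLinearMap

theorem pow_apply_of_commute {R E : Type*} [Semiring R] [TopologicalSpace E] [AddCommMonoid E]
    [Module R E] {A T : E →L[R] E} (h : Commute A T) (n : ℕ) (x : E) :
    (T ^ n) (A x) = A ((T ^ n) x) :=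
  (DFunLike.congr_fun (h.pow_right n).eq x).symm

theorem inner_star_mul_mul_apply {𝕜 E : Type*} [RCLike 𝕜] [NormedAddCommGroup E]
    [InnerProductSpace 𝕜 E] [CompleteSpace E] (A X B : E →L[𝕜] E) (x y : E) :
    inner 𝕜 y ((star A * X * B) x) = inner 𝕜 (A y) (X (B x)) := by
  rw [star_eq_adjoint, mul_apply_eq_comp, mul_apply_eq_comp, adjoint_inner_right]

end ContinuousLinearMap

theorem E_LT_bimodule_general
    {H : Type*} [NormedAddCommGroup H] [InnerProductSpace ℂ H] [CompleteSpace H]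
    (M : VonNeumannAlgebra H) (T : H →L[ℂ] H)
    (p : ℕ → ℝ)
    (L : BanachLimit)
    (E : (H →L[ℂ] H) → (H →L[ℂ] H))
    (hE : ∀ (X : H →L[ℂ] H) (x y : H),
      (inner ℂ y (E X x) : ℂ) =
        L.toFun (fun n => (inner ℂ ((T ^ n) y) (X ((T ^ n) x)) : ℂ) / ((p n : ℂ) ^ 2)))
    (A B : H →L[ℂ] H)
    (hAT : A * T = T * A) (hBT : B * T = T * B) :
    ∀ X ∈ M, E (star A * X * B) = star A * E X * B := by
  intro X _
  ext x
  refine ext_inner_left ℂ fun y => ?_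
  rw [ContinuousLinearMap.inner_star_mul_mul_apply, hE, hE]
  -- `A` and `B` commute with every `T ^ n`, so both sides are `L` of the same sequence.
  congr 1
  funext n
  rw [ContinuousLinearMap.pow_apply_of_commute hAT, ContinuousLinearMap.pow_apply_of_commute hBT,
    ContinuousLinearMap.inner_star_mul_mul_apply]

/-- If `A, B ∈ M` commute with `T`, then `E_{L,T}(A* X B) = A* E_{L,T}(X) B`. -/
theorem E_LT_bimodule
    {H : Type*} [NormedAddCommGroup H] [InnerProductSpace ℂ H] [CompleteSpace H]
    (M : VonNeumannAlgebra H) (T : H →L[ℂ] H) (hT : T ∈ M)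
    (p : ℕ → ℝ) (c : ℝ) (hp : IsGauge p c)
    (hdom : ∀ n : ℕ, 1 ≤ n → ‖T ^ n‖ ≤ p n)
    (L : BanachLimit)
    (E : (H →L[ℂ] H) → (H →L[ℂ] H))
    (hE : ∀ (X : H →L[ℂ] H) (x y : H),
      (inner ℂ y (E X x) : ℂ) =
        L.toFun (fun n => (inner ℂ ((T ^ n) y) (X ((T ^ n) x)) : ℂ) / ((p n : ℂ) ^ 2)))
    (A B : H →L[ℂ] H) (hA : A ∈ M) (hB : B ∈ M)
    (hAT : A * T = T * A) (hBT : B * T = T * B) :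
    ∀ X ∈ M, E (star A * X * B) = star A * E X * B :=
  E_LT_bimodule_general M T p L E hE A B hAT hBT
end
end

section
/- Let M be a von Neumann algebra, T ∈ M, and suppose there is a positive injective operator X ∈ M with T* X T = c² X for some c > 0. Then there exists a unique isometry U ∈ M with √X T = c U √X; if moreover M is finite, U is unitary. If S ∈ M commutes with T and also satisfies S* X S = d² X with √X S = d U_S √X, then U and U_S commute. -/
noncomputable section

variable {H : Type*} [NormedAddCommGroup H] [InnerProductSpace ℂ H] [CompleteSpace H]

section AuxIntertwine

open ContinuousLinearMap

set_option linter.unusedSectionVars false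

local notation "⟪" x ", " y "⟫" => @inner ℂ _ _ x y

lemma aux_sa_inner (sqX : H →L[ℂ] H) (hsa : IsSelfAdjoint sqX) (a b : H) :
    ⟪sqX a, b⟫ = ⟪a, sqX b⟫ := by
  conv_lhs => rw [← hsa.star_eq, star_eq_adjoint, adjoint_inner_left]

lemma aux_dense (sqX : H →L[ℂ] H) (hsa : IsSelfAdjoint sqX)
    (hinj : Function.Injective (sqX * sqX)) :
    Dense (Set.range sqX) := by
  have h : (LinearMap.range (sqX : H →ₗ[ℂ] H)).topologicalClosure = ⊤ := by
    rw [Submodule.topologicalClosure_eq_top_iff, Submodule.eq_bot_iff]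
    intro y hy
    have h2 : ⟪sqX y, sqX y⟫ = 0 := by
      have := hy (sqX (sqX y)) ⟨sqX y, rfl⟩
      rwa [aux_sa_inner sqX hsa] at this
    have h1 : sqX y = 0 := inner_self_eq_zero.mp h2
    have : (sqX * sqX) y = (sqX * sqX) 0 := by simp [mul_apply, h1]
    exact hinj this
  have h3 : Dense ((LinearMap.range (sqX : H →ₗ[ℂ] H) : Submodule ℂ H) : Set H) :=
    Submodule.dense_iff_topologicalClosure_eq_top.mpr h
  simpa [LinearMap.coe_range] using h3

lemma aux_ext (sqX : H →L[ℂ] H) (hd : Dense (Set.range sqX)) {A B : H →L[ℂ] H}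
    (h : ∀ x, A (sqX x) = B (sqX x)) : A = B := by
  have := Continuous.ext_on hd A.continuous B.continuous ?_
  · exact ContinuousLinearMap.ext fun y => congrFun this y
  · rintro _ ⟨x, rfl⟩; exact h x

lemma aux_norm (sqX T X : H →L[ℂ] H) (hsa : IsSelfAdjoint sqX)
    (hsq : sqX * sqX = X) (c : ℝ) (hc : 0 < c)
    (hTX : star T * X * T = ((c : ℂ) ^ 2) • X) (x : H) :
    ‖sqX (T x)‖ = c * ‖sqX x‖ := by
  have key : ⟪sqX (T x), sqX (T x)⟫ = ((c : ℂ) ^ 2) * ⟪sqX x, sqX x⟫ := by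
    rw [aux_sa_inner sqX hsa, aux_sa_inner sqX hsa x]
    have h1 : sqX (sqX (T x)) = X (T x) := by rw [← hsq]; rfl
    have h2 : sqX (sqX x) = X x := by rw [← hsq]; rfl
    rw [h1, h2]
    have h3 : ⟪T x, X (T x)⟫ = ⟪x, (star T * X * T) x⟫ := by
      rw [star_eq_adjoint]
      simp only [ContinuousLinearMap.mul_apply, adjoint_inner_right]
    rw [h3, hTX]
    simp [mul_apply, inner_smul_right]
  rw [inner_self_eq_norm_sq_to_K (𝕜 := ℂ), inner_self_eq_norm_sq_to_K (𝕜 := ℂ)] at key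
  have key3 : ‖sqX (T x)‖ ^ 2 = (c * ‖sqX x‖) ^ 2 := by
    have key2 : (Complex.ofReal ‖sqX (T x)‖) ^ 2
        = (Complex.ofReal c) ^ 2 * (Complex.ofReal ‖sqX x‖) ^ 2 := key
    rw [mul_pow]
    exact_mod_cast key2
  have h4 : (0 : ℝ) ≤ c * ‖sqX x‖ := by positivity
  calc ‖sqX (T x)‖ = Real.sqrt (‖sqX (T x)‖ ^ 2) := (Real.sqrt_sq (norm_nonneg _)).symm
    _ = Real.sqrt ((c * ‖sqX x‖) ^ 2) := by rw [key3]
    _ = c * ‖sqX x‖ := Real.sqrt_sq h4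

lemma aux_exists_U (sqX T : H →L[ℂ] H) (c : ℝ) (hc : 0 < c)
    (hinj : Function.Injective sqX) (hd : Dense (Set.range sqX))
    (hnorm : ∀ x, ‖sqX (T x)‖ = c * ‖sqX x‖) :
    ∃ U : H →L[ℂ] H, (∀ x, U (sqX x) = (c : ℂ)⁻¹ • sqX (T x)) ∧ star U * U = 1 := by
  set p := LinearMap.range (sqX : H →ₗ[ℂ] H) with hp
  have hinj' : Function.Injective (sqX : H →ₗ[ℂ] H) := hinj
  let e : H ≃ₗ[ℂ] p := LinearEquiv.ofInjective (sqX : H →ₗ[ℂ] H) hinj'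
  have he : ∀ x : H, ((e x : H)) = sqX x := fun x => rfl
  let g : H →L[ℂ] H := (c : ℂ)⁻¹ • (sqX.comp T)
  have hg : ∀ x, ‖g x‖ = ‖sqX x‖ := by
    intro x
    have h5 : ‖g x‖ = ‖(c : ℂ)⁻¹‖ * ‖sqX (T x)‖ := by
      simp [g, norm_smul]
    rw [h5, hnorm]
    have h6 : ‖((c : ℂ)⁻¹)‖ = c⁻¹ := by
      rw [norm_inv]
      simp [Complex.norm_real, abs_of_pos hc]
    rw [h6]
    field_simp
  let f₀ : p →ₗ[ℂ] H := g.toLinearMap.comp e.symm.toLinearMap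
  have hf₀ : ∀ y : p, ‖f₀ y‖ = ‖(y : H)‖ := by
    intro y
    have h1 : f₀ y = g (e.symm y) := rfl
    have h2 : ((y : H)) = sqX (e.symm y) := by
      conv_lhs => rw [← e.apply_symm_apply y]
      exact he _
    rw [h1, h2, hg]
  let f : p →L[ℂ] H := f₀.mkContinuous 1 (fun y => by rw [hf₀]; simp)
  have hdp : Dense ((p : Set H)) := by
    have h7 : ((p : Set H)) = Set.range sqX := by
      simp [hp, LinearMap.coe_range]
    rw [h7]; exact hd
  have hdr : DenseRange (p.subtypeL) := hdp.denseRange_val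
  have hui : IsUniformInducing (p.subtypeL : p →L[ℂ] H) :=
    isometry_subtype_coe.isUniformInducing
  let U : H →L[ℂ] H := f.extend p.subtypeL
  have hUx : ∀ x, U (sqX x) = (c : ℂ)⁻¹ • sqX (T x) := by
    intro x
    have h1 : sqX x = p.subtypeL (e x) := (he x).symm
    rw [h1, ContinuousLinearMap.extend_eq (f := f) (e := p.subtypeL) hdr hui]
    show f₀ (e x) = _
    show g (e.symm (e x)) = _
    rw [e.symm_apply_apply]
    rfl
  have hUnorm : ∀ y, ‖U y‖ = ‖y‖ := by
    have := Continuous.ext_on hd (continuous_norm.comp U.continuous) continuous_norm ?_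
    · exact fun y => congrFun this y
    · rintro _ ⟨x, rfl⟩
      show ‖U (sqX x)‖ = ‖sqX x‖
      rw [hUx, norm_smul, hnorm]
      have h6 : ‖((c : ℂ)⁻¹)‖ = c⁻¹ := by
        rw [norm_inv]; simp [abs_of_pos hc]
      rw [h6]; field_simp
  let li : H →ₗᵢ[ℂ] H := ⟨U.toLinearMap, hUnorm⟩
  refine ⟨U, hUx, ?_⟩
  refine ContinuousLinearMap.ext fun x => ?_
  refine ext_inner_left ℂ fun v => ?_
  rw [ContinuousLinearMap.mul_apply, ContinuousLinearMap.one_apply, star_eq_adjoint,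
    adjoint_inner_right]
  exact li.inner_map_map v x

lemma aux_apply (sqX T U : H →L[ℂ] H) {c : ℝ} (hc : 0 < c)
    (hrel : sqX * T = (c : ℂ) • (U * sqX)) (x : H) :
    U (sqX x) = (c : ℂ)⁻¹ • sqX (T x) := by
  have hc0 : (c : ℂ) ≠ 0 := by exact_mod_cast hc.ne'
  have h := congrFun (congrArg (DFunLike.coe) hrel) x
  simp only [ContinuousLinearMap.mul_apply, ContinuousLinearMap.smul_apply, ContinuousLinearMap.coe_smul',
    Pi.smul_apply] at h
  rw [h, smul_smul, inv_mul_cancel₀ hc0, one_smul]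

end AuxIntertwine

/-- If `X ∈ M` is positive injective with `T* X T = c² X`, there is a unique
isometry `U ∈ M` with `√X T = c U √X`; if `M` is finite, `U` is unitary; and if
`S` commutes with `T` and satisfies the analogous relations, then `U` and `U_S`
commute. -/
theorem exists_unique_intertwining_isometry
    {H : Type*} [NormedAddCommGroup H] [InnerProductSpace ℂ H] [CompleteSpace H]
    (M : VonNeumannAlgebra H)
    (T S X sqX : H →L[ℂ] H)
    (hT : T ∈ M) (hS : S ∈ M) (hX : X ∈ M) (hsqX : sqX ∈ M)
    (hXpos : X.IsPositive) (hXinj : Function.Injective X)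
    (hsqpos : sqX.IsPositive) (hsq : sqX * sqX = X)
    (c d : ℝ) (hc : 0 < c) (hd : 0 < d)
    (hTX : star T * X * T = ((c : ℂ) ^ 2) • X)
    (hSX : star S * X * S = ((d : ℂ) ^ 2) • X)
    (hTS : T * S = S * T) :
    (∃! U : H →L[ℂ] H, U ∈ M ∧ star U * U = 1 ∧ sqX * T = (c : ℂ) • (U * sqX)) ∧
    (∀ U US : H →L[ℂ] H,
      (U ∈ M ∧ star U * U = 1 ∧ sqX * T = (c : ℂ) • (U * sqX)) →
      (US ∈ M ∧ star US * US = 1 ∧ sqX * S = (d : ℂ) • (US * sqX)) →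
      U * US = US * U) ∧
    ((∃ τ : (H →L[ℂ] H) →ₗ[ℂ] ℂ, IsFiniteTrace M τ) →
      ∀ U : H →L[ℂ] H,
        (U ∈ M ∧ star U * U = 1 ∧ sqX * T = (c : ℂ) • (U * sqX)) →
        U * star U = 1) := by
  classical
  have hsa : IsSelfAdjoint sqX := hsqpos.isSelfAdjoint
  have hc0 : (c : ℂ) ≠ 0 := by exact_mod_cast hc.ne'
  have hd0 : (d : ℂ) ≠ 0 := by exact_mod_cast hd.ne'
  have hsqinj : Function.Injective sqX := by
    intro a b hab
    apply hXinj
    rw [← hsq]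
    simp [ContinuousLinearMap.mul_apply, hab]
  have hdense : Dense (Set.range sqX) := by
    apply aux_dense sqX hsa
    rw [hsq]; exact hXinj
  have hnormT : ∀ x, ‖sqX (T x)‖ = c * ‖sqX x‖ := aux_norm sqX T X hsa hsq c hc hTX
  obtain ⟨U₀, hU₀x, hU₀iso⟩ := aux_exists_U sqX T c hc hsqinj hdense hnormT
  have hU₀rel : sqX * T = (c : ℂ) • (U₀ * sqX) := by
    ext x
    simp only [ContinuousLinearMap.mul_apply, ContinuousLinearMap.smul_apply,
      ContinuousLinearMap.coe_smul', Pi.smul_apply, hU₀x]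
    rw [smul_smul, mul_inv_cancel₀ hc0, one_smul]
  -- membership in M via the double commutant
  have hU₀mem : U₀ ∈ M := by
    have hmem : U₀ ∈ Set.centralizer (Set.centralizer (M : Set (H →L[ℂ] H))) := by
      rw [Set.mem_centralizer_iff]
      intro A hA
      have hAc := Set.mem_centralizer_iff.mp hA
      have hAsq : ∀ z, A (sqX z) = sqX (A z) := by
        intro z
        have := congrFun (congrArg DFunLike.coe (hAc sqX hsqX)) z
        simpa [ContinuousLinearMap.mul_apply] using this.symm
      have hAT : ∀ z, A (T z) = T (A z) := by
        intro z
        have := congrFun (congrArg DFunLike.coe (hAc T hT)) z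
        simpa [ContinuousLinearMap.mul_apply] using this.symm
      apply aux_ext sqX hdense
      intro x
      simp only [ContinuousLinearMap.mul_apply]
      rw [hU₀x, map_smul, hAsq, hAT, hAsq, hU₀x]
    rw [M.centralizer_centralizer] at hmem
    exact hmem
  refine ⟨⟨U₀, ⟨hU₀mem, hU₀iso, hU₀rel⟩, ?_⟩, ?_, ?_⟩
  · -- uniqueness
    rintro U' ⟨-, -, hrel'⟩
    apply aux_ext sqX hdense
    intro x
    rw [aux_apply sqX T U' hc hrel', hU₀x]
  · -- commutation
    rintro U US ⟨-, -, hrelU⟩ ⟨-, -, hrelS⟩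
    apply aux_ext sqX hdense
    intro x
    simp only [ContinuousLinearMap.mul_apply]
    rw [aux_apply sqX S US hd hrelS, map_smul, aux_apply sqX T U hc hrelU,
      aux_apply sqX T U hc hrelU, map_smul, aux_apply sqX S US hd hrelS]
    have hts : T (S x) = S (T x) := by
      have := congrFun (congrArg DFunLike.coe hTS) x
      simpa [ContinuousLinearMap.mul_apply] using this
    rw [hts, smul_comm]
  · -- finiteness implies unitarity
    rintro ⟨τ, htr⟩ U ⟨hUm, hUiso, -⟩
    have hUstar : star U ∈ M := star_mem hUm
    set P : H →L[ℂ] H := U * star U with hP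
    have hPM : P ∈ M := mul_mem hUm hUstar
    have hQM : (1 - P) ∈ M := sub_mem (one_mem M) hPM
    have hPid : P * P = P := by
      rw [hP, mul_assoc, ← mul_assoc (star U), hUiso, one_mul]
    have hPsa : IsSelfAdjoint P := by
      rw [IsSelfAdjoint, hP, star_mul, star_star]
    have hQsa : IsSelfAdjoint (1 - P) := by
      rw [IsSelfAdjoint, star_sub, star_one, hPsa.star_eq]
    have hQid : (1 - P) * (1 - P) = 1 - P := by
      rw [sub_mul, mul_sub, mul_sub, hPid, one_mul, mul_one]
      abel
    have hQpos : (1 - P).IsPositive := by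
      refine ⟨ContinuousLinearMap.isSelfAdjoint_iff_isSymmetric.mp hQsa, fun x => ?_⟩
      rw [ContinuousLinearMap.reApplyInnerSelf_apply]
      have h1 : (1 - P) x = (1 - P) ((1 - P) x) := by
        conv_lhs => rw [← hQid]
        rfl
      have h2 : (inner ℂ ((1 - P) x) x : ℂ) = inner ℂ ((1 - P) x) ((1 - P) x) := by
        conv_lhs => rw [h1, aux_sa_inner (1 - P) hQsa]
      rw [h2]
      exact inner_self_nonneg
    have htrP : τ P = τ 1 := by
      have h3 := htr.1 U hUm (star U) hUstar
      rw [hP, h3, hUiso]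
    have hτQ : τ (1 - P) = 0 := by rw [map_sub, htrP, sub_self]
    have h0 : (1 : H →L[ℂ] H) - P = 0 := htr.2.2.1 (1 - P) hQM hQpos hτQ
    exact (sub_eq_zero.mp h0).symm
end
end
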